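/- arXiv:1611.00869 — 6 statements merged into one kernel-verified Lean document; each statement's English description precedes it below -/
import Mathlib

section
/- Suppose n, n₁, n₂, n₃ are positive reals satisfying the packet-count balance equation n - (p₀·n + 1)·Δd = (n₁ + n₂ + n₃) - (p₁·n₁ + p₂·n₂ + 1)·Δd, where Δd ≥ 1, 0 < p₁ < p₂ ≤ p₀ < 1, p₂·Δd < 1, and n₃ ≥ 0. Then n > n₁ + n₂ + n₃. -/
theorem fewer_packets (n n₁ n₂ n₃ p₀ p₁ p₂ Δd : ℝ)
    (hn : 0 < n) (hn1 : 0 < n₁) (hn2 : 0 < n₂) (hn3 : 0 ≤ n₃)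
    (hΔ : 1 ≤ Δd)
    (hp1 : 0 < p₁) (h12 : p₁ < p₂) (h20 : p₂ ≤ p₀) (hp0 : p₀ < 1)
    (hp2Δ : p₂ * Δd < 1)
    (hbal : n - (p₀ * n + 1) * Δd
      = (n₁ + n₂ + n₃) - (p₁ * n₁ + p₂ * n₂ + 1) * Δd) :
    n > n₁ + n₂ + n₃ := by
  have hΔ0 : 0 < Δd := by linarith
  have h1 : 0 < 1 - p₂ * Δd := by linarith
  have key : (n₁ + n₂ + n₃) * (1 - p₂ * Δd) < n * (1 - p₂ * Δd) := by
    have e1 : n * (1 - p₀ * Δd) = n₁ * (1 - p₁ * Δd) + n₂ * (1 - p₂ * Δd) + n₃ := by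
      ring_nf; ring_nf at hbal; linarith
    have e2 : (n₁ + n₂ + n₃) * (1 - p₂ * Δd)
        < n₁ * (1 - p₁ * Δd) + n₂ * (1 - p₂ * Δd) + n₃ := by
      have h3 : 0 < n₁ * ((p₂ - p₁) * Δd) :=
        mul_pos hn1 (mul_pos (by linarith) hΔ0)
      have h4 : 0 ≤ n₃ * (p₂ * Δd) := mul_nonneg hn3 (mul_nonneg (by linarith) hΔ0.le)
      nlinarith
    have e3 : n * (1 - p₀ * Δd) ≤ n * (1 - p₂ * Δd) := by
      have : 0 ≤ n * ((p₀ - p₂) * Δd) :=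
        mul_nonneg hn.le (mul_nonneg (by linarith) hΔ0.le)
      nlinarith
    linarith
  exact lt_of_mul_lt_mul_right key h1.le
end

section
/- Assume p̃ ≥ p, 0 < p < 1, Δd ≥ 1, n₃ ≥ 0, p₀ = p̃^R, p_i = p^{R_i} with R₁ > R₂ = R > R₃ ≥ 1, and the balance equation n - (n₁+n₂+n₃) = [p₀n - (p₁n₁+p₂n₂)]·Δd with p₀n - (p₁n₁+p₂n₂) > 0. Then the total expected transmission attempts satisfy (1-p₀)/(1-p̃)·n ≥ ∑_{i=1}^{3} (1-p_i)/(1-p)·n_i. -/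
theorem compat_original (p p' : ℝ) (hp : 0 < p) (hp1 : p < 1) (hpp : p ≤ p') (hp'1 : p' < 1)
    (R R₁ R₃ : ℕ) (h1 : R < R₁) (h3 : R₃ < R) (h3' : 1 ≤ R₃)
    (n n₁ n₂ n₃ Δd : ℝ) (hn : 0 < n) (hn1 : 0 < n₁) (hn2 : 0 < n₂) (hn3 : 0 ≤ n₃)
    (hΔ : 1 ≤ Δd)
    (p₀ p₁ p₂ : ℝ) (hp₀ : p₀ = p' ^ R) (hp₁ : p₁ = p ^ R₁) (hp₂ : p₂ = p ^ R)
    (hbal : n - (n₁ + n₂ + n₃) = (p₀ * n - (p₁ * n₁ + p₂ * n₂)) * Δd)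
    (hpos : 0 < p₀ * n - (p₁ * n₁ + p₂ * n₂)) :
    (1 - p₀) / (1 - p') * n
      ≥ (1 - p₁) / (1 - p) * n₁ + (1 - p₂) / (1 - p) * n₂ + (1 - p ^ R₃) / (1 - p) * n₃ := by
  have hp' : 0 < p' := lt_of_lt_of_le hp hpp
  have h1p : (0:ℝ) < 1 - p := by linarith
  have h1p' : (0:ℝ) < 1 - p' := by linarith
  have hp₀1 : p₀ ≤ 1 := by rw [hp₀]; exact pow_le_one₀ hp'.le hp'1.le
  have hp3 : 0 ≤ p ^ R₃ * n₃ := mul_nonneg (pow_nonneg hp.le R₃) hn3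
  have key : (1 - p₁) * n₁ + (1 - p₂) * n₂ + (1 - p ^ R₃) * n₃ ≤ (1 - p₀) * n := by
    nlinarith [mul_nonneg (sub_nonneg.mpr hΔ) hpos.le]
  rw [ge_iff_le]
  calc (1 - p₁) / (1 - p) * n₁ + (1 - p₂) / (1 - p) * n₂ + (1 - p ^ R₃) / (1 - p) * n₃
      = ((1 - p₁) * n₁ + (1 - p₂) * n₂ + (1 - p ^ R₃) * n₃) / (1 - p) := by ring
    _ ≤ ((1 - p₀) * n) / (1 - p) := (div_le_div_iff_of_pos_right h1p).mpr key
    _ ≤ ((1 - p₀) * n) / (1 - p') := div_le_div_of_nonneg_left (mul_nonneg (by linarith) hn.le) h1p' (by linarith)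
    _ = (1 - p₀) / (1 - p') * n := by ring
end

section
/- Suppose 0 < p < 1, integers R₁ > R > R₃ ≥ 1, D ≥ 1, d' ≥ 1, n₁ > 0, n₂ ≥ 0, and n₃ ≥ (D-1)·p^{R₁}·d'·n₁. If (p^{R₃+R₁-R} - p^{R₁})·(D-1)·d' - (1 - p^{R₁-R}) > 0, then (1-p^R)/(1-p)·(n₁+n₂+n₃) > ∑_{i=1}^{3} (1-p^{R_i})/(1-p)·n_i, where R₂ = R. -/
theorem compat_proposed (p : ℝ) (hp : 0 < p) (hp1 : p < 1)
    (R R₁ R₃ D d' : ℕ) (h1 : R < R₁) (h3 : R₃ < R) (h3' : 1 ≤ R₃)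
    (hD : 1 ≤ D) (hd' : 1 ≤ d')
    (n₁ n₂ n₃ : ℝ) (hn1 : 0 < n₁) (hn2 : 0 ≤ n₂)
    (hn3 : n₃ ≥ ((D : ℝ) - 1) * p ^ R₁ * (d' : ℝ) * n₁)
    (hcond : (p ^ (R₃ + R₁ - R) - p ^ R₁) * ((D : ℝ) - 1) * (d' : ℝ)
      - (1 - p ^ (R₁ - R)) > 0) :
    (1 - p ^ R) / (1 - p) * (n₁ + n₂ + n₃)
      > (1 - p ^ R₁) / (1 - p) * n₁ + (1 - p ^ R) / (1 - p) * n₂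
        + (1 - p ^ R₃) / (1 - p) * n₃ := by
  have hps : (0:ℝ) < 1 - p := by linarith
  have hq1 : p ^ R₁ = p ^ R * p ^ (R₁ - R) := by
    rw [← pow_add]; congr 1; omega
  have hq2 : p ^ (R₃ + R₁ - R) = p ^ R₃ * p ^ (R₁ - R) := by
    rw [← pow_add]; congr 1; omega
  have hpR : (0:ℝ) < p ^ R := pow_pos hp R
  have hp3 : p ^ R < p ^ R₃ := pow_lt_pow_right_of_lt_one₀ hp hp1 h3
  rw [hq1, hq2] at hcond
  -- key inequality: multiply hcond by p^R > 0
  have key : (p ^ R₃ - p ^ R) * (((D:ℝ) - 1) * p ^ R₁ * (d':ℝ)) > p ^ R - p ^ R₁ := by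
    rw [hq1]
    nlinarith [mul_pos hpR hcond]
  have keyn : (p ^ R₃ - p ^ R) * (((D:ℝ) - 1) * p ^ R₁ * (d':ℝ) * n₁)
      > (p ^ R - p ^ R₁) * n₁ := by nlinarith [key]
  have hmono : (p ^ R₃ - p ^ R) * n₃
      ≥ (p ^ R₃ - p ^ R) * (((D:ℝ) - 1) * p ^ R₁ * (d':ℝ) * n₁) :=
    mul_le_mul_of_nonneg_left hn3 (by linarith)
  have core : (1 - p ^ R₁) * n₁ + (1 - p ^ R) * n₂ + (1 - p ^ R₃) * n₃
      < (1 - p ^ R) * (n₁ + n₂ + n₃) := by nlinarith [keyn, hmono]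
  calc (1 - p ^ R₁) / (1 - p) * n₁ + (1 - p ^ R) / (1 - p) * n₂
        + (1 - p ^ R₃) / (1 - p) * n₃
      = ((1 - p ^ R₁) * n₁ + (1 - p ^ R) * n₂ + (1 - p ^ R₃) * n₃) / (1 - p) := by
        ring
    _ < (1 - p ^ R) * (n₁ + n₂ + n₃) / (1 - p) := by
        exact div_lt_div_of_pos_right core hps
    _ = (1 - p ^ R) / (1 - p) * (n₁ + n₂ + n₃) := by ring
end

section
/- For the Markov chain on states {(I,1),…,(I,d), (N,1),…,(N,d'), (3,1),…,(3,(D-1)d')} where (I,i)→(I,i+1) w.p. 1 for i<d, (N,j)→(N,j+1) w.p. 1 for j<d', (3,k)→(3,k+1) w.p. 1 for k<(D-1)d', (I,d)→(N,1) w.p. P_a and (I,d)→(3,1) w.p. 1-P_a, (N,d')→(N,1) w.p. P_b and (N,d')→(3,1) w.p. 1-P_b, and (3,(D-1)d')→(I,1) w.p. 1, the stationary distribution satisfies q_{I,i} = q_{3,k} = (1-P_b)/([d+(D-1)d'](1-P_b) + P_a·d') for all i,k, and q_{N,j} = P_a/(1-P_b)·q_{I,1}. -/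
private lemma sum_mul_ite_eq {n : ℕ} (f : Fin n → ℝ) (P : Fin n → Prop) [DecidablePred P]
    (c : ℝ) (a : Fin n) (h : ∀ i, P i ↔ i = a) :
    ∑ i, f i * (if P i then c else 0) = f a * c := by
  rw [Finset.sum_eq_single a]
  · rw [if_pos ((h a).mpr rfl)]
  · intro b _ hb
    rw [if_neg (fun hp => hb ((h b).mp hp)), mul_zero]
  · intro hmem; exact absurd (Finset.mem_univ a) hmem

private lemma sum_mul_ite_zero {n : ℕ} (f : Fin n → ℝ) (P : Fin n → Prop) [DecidablePred P]
    (c : ℝ) (h : ∀ i, ¬ P i) :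
    ∑ i, f i * (if P i then c else 0) = 0 :=
  Finset.sum_eq_zero fun i _ => by rw [if_neg (h i), mul_zero]

/-- State space of the packet-class Markov chain:
`Sum.inl i` is packet `i` of an IDR frame,
`Sum.inr (Sum.inl j)` is packet `j` of a non-IDR (priority-1) frame,
`Sum.inr (Sum.inr m)` is the `m`-th priority-3 packet of a frozen interval. -/
abbrev PktState (d d' k : ℕ) := Fin d ⊕ (Fin d' ⊕ Fin k)

/-- Transition probabilities of the packet-class Markov chain. -/
def pktTrans (d d' k : ℕ) (Pa Pb : ℝ) :
    PktState d d' k → PktState d d' k → ℝ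
  | Sum.inl i, Sum.inl i' => if i.val + 1 = i'.val then 1 else 0
  | Sum.inl i, Sum.inr (Sum.inl j) =>
      if i.val = d - 1 ∧ j.val = 0 then Pa else 0
  | Sum.inl i, Sum.inr (Sum.inr m) =>
      if i.val = d - 1 ∧ m.val = 0 then 1 - Pa else 0
  | Sum.inr (Sum.inl j), Sum.inr (Sum.inl j') =>
      if j.val + 1 = j'.val then 1
      else if j.val = d' - 1 ∧ j'.val = 0 then Pb else 0
  | Sum.inr (Sum.inl j), Sum.inr (Sum.inr m) =>
      if j.val = d' - 1 ∧ m.val = 0 then 1 - Pb else 0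
  | Sum.inr (Sum.inr m), Sum.inr (Sum.inr m') =>
      if m.val + 1 = m'.val then 1 else 0
  | Sum.inr (Sum.inr m), Sum.inl i =>
      if m.val = k - 1 ∧ i.val = 0 then 1 else 0
  | _, _ => 0

theorem stationary_distribution (d d' D : ℕ) (hd : 1 ≤ d) (hd' : 1 ≤ d') (hD : 2 ≤ D)
    (p₁ Pa Pb : ℝ) (hp₁ : 0 < p₁) (hp₁' : p₁ < 1)
    (hPa : Pa = (1 - p₁) ^ d) (hPb : Pb = (1 - p₁) ^ d')
    (q : PktState d d' ((D - 1) * d') → ℝ)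
    (hq0 : ∀ s, 0 ≤ q s)
    (hqsum : ∑ s, q s = 1)
    (hstat : ∀ s, q s = ∑ t, q t * pktTrans d d' ((D - 1) * d') Pa Pb t s) :
    (∀ i : Fin d, q (Sum.inl i)
        = (1 - Pb) / (((d : ℝ) + ((D : ℝ) - 1) * (d' : ℝ)) * (1 - Pb) + Pa * (d' : ℝ))) ∧
    (∀ m : Fin ((D - 1) * d'), q (Sum.inr (Sum.inr m))
        = (1 - Pb) / (((d : ℝ) + ((D : ℝ) - 1) * (d' : ℝ)) * (1 - Pb) + Pa * (d' : ℝ))) ∧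
    (∀ j : Fin d', q (Sum.inr (Sum.inl j))
        = Pa / (1 - Pb) * q (Sum.inl ⟨0, hd⟩)) := by
  have hk : 0 < ((D - 1) * d') := Nat.mul_pos (by omega) hd'
  have hsplit : ∀ s, q s = (∑ i, q (Sum.inl i) * pktTrans d d' ((D - 1) * d') Pa Pb (Sum.inl i) s)
      + ((∑ j, q (Sum.inr (Sum.inl j)) * pktTrans d d' ((D - 1) * d') Pa Pb (Sum.inr (Sum.inl j)) s)
      + (∑ m, q (Sum.inr (Sum.inr m)) * pktTrans d d' ((D - 1) * d') Pa Pb (Sum.inr (Sum.inr m)) s)) := by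
    intro s; rw [hstat s, Fintype.sum_sum_type, Fintype.sum_sum_type]
  -- balance equations
  have hIsucc : ∀ (n : ℕ) (h : n + 1 < d),
      q (Sum.inl ⟨n+1, h⟩) = q (Sum.inl ⟨n, by omega⟩) := by
    intro n h
    have e := hsplit (Sum.inl ⟨n+1, h⟩)
    simp only [pktTrans] at e
    rw [sum_mul_ite_eq (fun i => q (Sum.inl i)) _ 1 ⟨n, by omega⟩
        (by intro i; simp [Fin.ext_iff])] at e
    rw [sum_mul_ite_zero (fun m => q (Sum.inr (Sum.inr m))) _ 1 (by simp)] at e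
    simpa using e
  have hI0 : q (Sum.inl ⟨0, hd⟩) = q (Sum.inr (Sum.inr ⟨((D - 1) * d') - 1, by omega⟩)) := by
    have e := hsplit (Sum.inl ⟨0, hd⟩)
    simp only [pktTrans] at e
    rw [sum_mul_ite_zero (fun i => q (Sum.inl i)) _ 1 (by simp)] at e
    rw [sum_mul_ite_eq (fun m => q (Sum.inr (Sum.inr m))) _ 1 ⟨((D - 1) * d') - 1, by omega⟩
        (by intro m; simp [Fin.ext_iff])] at e
    simpa using e
  have hNsucc : ∀ (n : ℕ) (h : n + 1 < d'),
      q (Sum.inr (Sum.inl ⟨n+1, h⟩)) = q (Sum.inr (Sum.inl ⟨n, by omega⟩)) := by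
    intro n h
    have e := hsplit (Sum.inr (Sum.inl ⟨n+1, h⟩))
    simp only [pktTrans] at e
    rw [sum_mul_ite_zero (fun i => q (Sum.inl i)) _ Pa (by simp)] at e
    have hrw : ∀ j : Fin d',
        (if j.val + 1 = ((⟨n+1, h⟩ : Fin d') : ℕ) then (1:ℝ)
          else if j.val = d' - 1 ∧ ((⟨n+1, h⟩ : Fin d') : ℕ) = 0 then Pb else 0)
        = if j.val + 1 = n + 1 then (1:ℝ) else 0 := by
      intro j; by_cases hc : j.val + 1 = n + 1 <;> simp [hc]
    simp only [hrw] at e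
    rw [sum_mul_ite_eq (fun j => q (Sum.inr (Sum.inl j))) _ 1 ⟨n, by omega⟩
        (by intro j; simp [Fin.ext_iff])] at e
    simpa using e
  have hMsucc : ∀ (n : ℕ) (h : n + 1 < ((D - 1) * d')),
      q (Sum.inr (Sum.inr ⟨n+1, h⟩)) = q (Sum.inr (Sum.inr ⟨n, by omega⟩)) := by
    intro n h
    have e := hsplit (Sum.inr (Sum.inr ⟨n+1, h⟩))
    simp only [pktTrans] at e
    rw [sum_mul_ite_zero (fun i => q (Sum.inl i)) _ (1 - Pa) (by simp)] at e
    rw [sum_mul_ite_zero (fun j => q (Sum.inr (Sum.inl j))) _ (1 - Pb) (by simp)] at e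
    rw [sum_mul_ite_eq (fun m => q (Sum.inr (Sum.inr m))) _ 1 ⟨n, by omega⟩
        (by intro m; simp [Fin.ext_iff])] at e
    simpa using e
  have hN0 : q (Sum.inr (Sum.inl ⟨0, hd'⟩))
      = q (Sum.inl ⟨d - 1, by omega⟩) * Pa
        + q (Sum.inr (Sum.inl ⟨d' - 1, by omega⟩)) * Pb := by
    have e := hsplit (Sum.inr (Sum.inl ⟨0, hd'⟩))
    simp only [pktTrans] at e
    rw [sum_mul_ite_eq (fun i => q (Sum.inl i)) _ Pa ⟨d - 1, by omega⟩
        (by intro i; simp [Fin.ext_iff])] at e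
    have hrw : ∀ j : Fin d',
        (if j.val + 1 = 0 then (1:ℝ)
          else if j.val = d' - 1 ∧ True then Pb else 0)
        = if j.val = d' - 1 then Pb else 0 := by
      intro j; simp
    simp only [hrw] at e
    rw [sum_mul_ite_eq (fun j => q (Sum.inr (Sum.inl j))) _ Pb ⟨d' - 1, by omega⟩
        (by intro j; simp [Fin.ext_iff])] at e
    simpa using e
  -- constancy on each segment
  have hIconst : ∀ (n : ℕ) (h : n < d), q (Sum.inl ⟨n, h⟩) = q (Sum.inl ⟨0, hd⟩) := by
    intro n
    induction n with
    | zero => intro h; rfl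
    | succ m ih => intro h; rw [hIsucc m h]; exact ih (by omega)
  have hNconst : ∀ (n : ℕ) (h : n < d'),
      q (Sum.inr (Sum.inl ⟨n, h⟩)) = q (Sum.inr (Sum.inl ⟨0, hd'⟩)) := by
    intro n
    induction n with
    | zero => intro h; rfl
    | succ m ih => intro h; rw [hNsucc m h]; exact ih (by omega)
  have hMconst : ∀ (n : ℕ) (h : n < ((D - 1) * d')),
      q (Sum.inr (Sum.inr ⟨n, h⟩)) = q (Sum.inr (Sum.inr ⟨0, hk⟩)) := by
    intro n
    induction n with
    | zero => intro h; rfl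
    | succ m ih => intro h; rw [hMsucc m h]; exact ih (by omega)
  set a := q (Sum.inl ⟨0, hd⟩) with hadef
  set b := q (Sum.inr (Sum.inl ⟨0, hd'⟩)) with hbdef
  set c := q (Sum.inr (Sum.inr ⟨0, hk⟩)) with hcdef
  have hca : c = a := by rw [hI0, hMconst (((D - 1) * d') - 1) (by omega)]
  have hbeq : b = a * Pa + b * Pb := by
    have e := hN0
    rw [hIconst (d - 1) (by omega), hNconst (d' - 1) (by omega)] at e
    exact e
  -- total mass
  have hIall : ∀ i : Fin d, q (Sum.inl i) = a := fun i => by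
    rw [← Fin.eta i i.isLt]; exact hIconst i.val i.isLt
  have hNall : ∀ j : Fin d', q (Sum.inr (Sum.inl j)) = b := fun j => by
    rw [← Fin.eta j j.isLt]; exact hNconst j.val j.isLt
  have hMall : ∀ m : Fin ((D - 1) * d'), q (Sum.inr (Sum.inr m)) = c := fun m => by
    rw [← Fin.eta m m.isLt]; exact hMconst m.val m.isLt
  have s1 : ∑ i : Fin d, q (Sum.inl i) = (d : ℝ) * a := by
    simp only [hIall, Finset.sum_const, Finset.card_univ, Fintype.card_fin, nsmul_eq_mul]
  have s2 : ∑ j : Fin d', q (Sum.inr (Sum.inl j)) = (d' : ℝ) * b := by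
    simp only [hNall, Finset.sum_const, Finset.card_univ, Fintype.card_fin, nsmul_eq_mul]
  have s3 : ∑ m : Fin ((D - 1) * d'), q (Sum.inr (Sum.inr m)) = ((((D - 1) * d') : ℕ) : ℝ) * c := by
    simp only [hMall, Finset.sum_const, Finset.card_univ, Fintype.card_fin, nsmul_eq_mul]
  rw [Fintype.sum_sum_type, Fintype.sum_sum_type, s1, s2, s3] at hqsum
  have hsum := hqsum
  -- numerics
  have h1p : 0 < 1 - p₁ := by linarith
  have hPa0 : 0 < Pa := by rw [hPa]; positivity
  have hPb1 : Pb < 1 := by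
    rw [hPb]; exact pow_lt_one₀ (by linarith) (by linarith) (by omega)
  have h1Pb : 0 < 1 - Pb := by linarith
  have hb1Pb : b * (1 - Pb) = Pa * a := by nlinarith [hbeq]
  have hd1 : (1:ℝ) ≤ (d:ℝ) := by exact_mod_cast hd
  have hd'1 : (1:ℝ) ≤ (d':ℝ) := by exact_mod_cast hd'
  have hk1 : (1:ℝ) ≤ ((((D - 1) * d') : ℕ):ℝ) := Nat.one_le_cast.mpr hk
  have hden : 0 < ((d : ℝ) + ((((D - 1) * d') : ℕ) : ℝ)) * (1 - Pb) + Pa * (d' : ℝ) := by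
    have h1 : 0 < ((d : ℝ) + ((((D - 1) * d') : ℕ) : ℝ)) * (1 - Pb) :=
      mul_pos (by linarith) h1Pb
    have h2 : 0 < Pa * (d' : ℝ) := mul_pos hPa0 (by linarith)
    linarith
  have hkcast : ((((D - 1) * d') : ℕ) : ℝ) = ((D : ℝ) - 1) * (d' : ℝ) := by
    push_cast [Nat.cast_sub (show 1 ≤ D by omega)]; ring
  have ha : a = (1 - Pb) / (((d : ℝ) + ((D : ℝ) - 1) * (d' : ℝ)) * (1 - Pb) + Pa * (d' : ℝ)) := by
    rw [← hkcast, eq_div_iff (ne_of_gt hden)]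
    rw [hca] at hsum
    linear_combination (1 - Pb) * hsum - (d' : ℝ) * hb1Pb
  refine ⟨?_, ?_, ?_⟩
  · intro i
    rw [hIall i, ha]
  · intro m
    rw [hMall m, hca, ha]
  · intro j
    rw [hNall j, eq_comm, div_mul_eq_mul_div, div_eq_iff (by linarith)]
    linarith [hb1Pb]
end

section
/- In the stationary distribution of the packet-class Markov chain, the probability that a packet belongs to an IDR frame is q_I = d(1-P_b)/([d+(D-1)d'](1-P_b) + P_a·d'). -/
/-- A function on `Fin n` whose value is preserved by the successor step is constant. -/
lemma pkt_constChain {n : ℕ} (f : Fin n → ℝ)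
    (step : ∀ (i : Fin n) (h : i.val + 1 < n), f ⟨i.val + 1, h⟩ = f i) (hn : 0 < n) :
    ∀ i : Fin n, f i = f ⟨0, hn⟩ := by
  have key : ∀ m (hm : m < n), f ⟨m, hm⟩ = f ⟨0, hn⟩ := by
    intro m
    induction m with
    | zero => intro _; rfl
    | succ m ih => intro hm; rw [step ⟨m, by omega⟩ hm, ih]
  intro i
  simpa using key i.val i.isLt

section aux
variable {d d' k : ℕ} {Pa Pb : ℝ} {q : PktState d d' k → ℝ}
variable (hstat : ∀ s, q s = ∑ t, q t * pktTrans d d' k Pa Pb t s)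
include hstat

lemma pkt_chainI (i : Fin d) (h : i.val + 1 < d) :
    q (Sum.inl ⟨i.val + 1, h⟩) = q (Sum.inl i) := by
  rw [hstat (Sum.inl ⟨i.val + 1, h⟩), Fintype.sum_sum_type, Fintype.sum_sum_type]
  simp [pktTrans, Fin.val_inj, Finset.sum_ite_eq']

lemma pkt_chainN (j : Fin d') (h : j.val + 1 < d') :
    q (Sum.inr (Sum.inl ⟨j.val + 1, h⟩)) = q (Sum.inr (Sum.inl j)) := by
  rw [hstat (Sum.inr (Sum.inl ⟨j.val + 1, h⟩)), Fintype.sum_sum_type, Fintype.sum_sum_type]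
  simp [pktTrans, Fin.val_inj, Finset.sum_ite_eq']

lemma pkt_chainF (m : Fin k) (h : m.val + 1 < k) :
    q (Sum.inr (Sum.inr ⟨m.val + 1, h⟩)) = q (Sum.inr (Sum.inr m)) := by
  rw [hstat (Sum.inr (Sum.inr ⟨m.val + 1, h⟩)), Fintype.sum_sum_type, Fintype.sum_sum_type]
  simp [pktTrans, Fin.val_inj, Finset.sum_ite_eq']

lemma pkt_bdryI (hd : 0 < d) (hk : 0 < k) :
    q (Sum.inl ⟨0, hd⟩) = q (Sum.inr (Sum.inr ⟨k - 1, by omega⟩)) := by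
  rw [hstat (Sum.inl ⟨0, hd⟩), Fintype.sum_sum_type, Fintype.sum_sum_type]
  have : ∀ m : Fin k, (m.val = k - 1) = (m = ⟨k - 1, by omega⟩) := by
    intro m; rw [Fin.ext_iff]
  simp [pktTrans, this, Finset.sum_ite_eq']

lemma pkt_bdryN (hd : 0 < d) (hd' : 0 < d') :
    q (Sum.inr (Sum.inl ⟨0, hd'⟩))
      = q (Sum.inl ⟨d - 1, by omega⟩) * Pa + q (Sum.inr (Sum.inl ⟨d' - 1, by omega⟩)) * Pb := by
  rw [hstat (Sum.inr (Sum.inl ⟨0, hd'⟩)), Fintype.sum_sum_type, Fintype.sum_sum_type]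
  have h1 : ∀ i : Fin d, (i.val = d - 1) = (i = ⟨d - 1, by omega⟩) := by
    intro i; rw [Fin.ext_iff]
  have h2 : ∀ j : Fin d', (j.val = d' - 1) = (j = ⟨d' - 1, by omega⟩) := by
    intro j; rw [Fin.ext_iff]
  simp [pktTrans, h1, h2, Finset.sum_ite_eq']

end aux

theorem idr_packet_probability (d d' D : ℕ) (hd : 1 ≤ d) (hd' : 1 ≤ d') (hD : 2 ≤ D)
    (Pa Pb : ℝ) (hPa0 : 0 < Pa) (hPa1 : Pa < 1) (hPb0 : 0 < Pb) (hPb1 : Pb < 1)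
    (q : PktState d d' ((D - 1) * d') → ℝ)
    (hq0 : ∀ s, 0 ≤ q s)
    (hqsum : ∑ s, q s = 1)
    (hstat : ∀ s, q s = ∑ t, q t * pktTrans d d' ((D - 1) * d') Pa Pb t s) :
    ∑ i : Fin d, q (Sum.inl i)
      = (d : ℝ) * (1 - Pb)
        / (((d : ℝ) + ((D : ℝ) - 1) * (d' : ℝ)) * (1 - Pb) + Pa * (d' : ℝ)) := by
  have hd0 : 0 < d := hd
  have hd'0 : 0 < d' := hd'
  have hk : 0 < (D - 1) * d' := Nat.mul_pos (by omega) hd'0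
  set a := q (Sum.inl ⟨0, hd0⟩) with ha
  set b := q (Sum.inr (Sum.inl ⟨0, hd'0⟩)) with hb
  set c := q (Sum.inr (Sum.inr ⟨0, hk⟩)) with hc
  have hA : ∀ i : Fin d, q (Sum.inl i) = a :=
    pkt_constChain (fun i => q (Sum.inl i)) (pkt_chainI hstat) hd0
  have hB : ∀ j : Fin d', q (Sum.inr (Sum.inl j)) = b :=
    pkt_constChain (fun j => q (Sum.inr (Sum.inl j))) (pkt_chainN hstat) hd'0
  have hC : ∀ m : Fin ((D - 1) * d'), q (Sum.inr (Sum.inr m)) = c :=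
    pkt_constChain (fun m => q (Sum.inr (Sum.inr m))) (pkt_chainF hstat) hk
  -- boundary equations
  have hac : a = c := by
    rw [ha, pkt_bdryI hstat hd0 hk, hC]
  have hbeq : b = a * Pa + b * Pb := by
    have := pkt_bdryN hstat hd0 hd'0
    simp only [hA, hB] at this
    exact this
  -- total probability
  rw [Fintype.sum_sum_type, Fintype.sum_sum_type] at hqsum
  rw [Finset.sum_congr rfl fun i _ => hA i, Finset.sum_congr rfl fun j _ => hB j,
    Finset.sum_congr rfl fun m _ => hC m, Finset.sum_const, Finset.sum_const,
    Finset.sum_const, Finset.card_univ, Finset.card_univ, Finset.card_univ,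
    Fintype.card_fin, Fintype.card_fin, Fintype.card_fin, nsmul_eq_mul, nsmul_eq_mul,
    nsmul_eq_mul] at hqsum
  -- the goal's LHS
  rw [Finset.sum_congr rfl fun i _ => hA i, Finset.sum_const, Finset.card_univ,
    Fintype.card_fin, nsmul_eq_mul]
  -- cast of k
  have hkcast : (((D - 1) * d' : ℕ) : ℝ) = ((D : ℝ) - 1) * (d' : ℝ) := by
    push_cast [Nat.cast_sub (by omega : 1 ≤ D)]
    ring
  rw [hkcast, ← hac] at hqsum
  have h1b : (0:ℝ) < 1 - Pb := by linarith
  have hdpos : (0:ℝ) < (d : ℝ) := by exact_mod_cast hd0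
  have hd'nn : (0:ℝ) ≤ (d' : ℝ) := Nat.cast_nonneg _
  have hDm1 : (0:ℝ) ≤ (D : ℝ) - 1 := by
    have : (2:ℝ) ≤ (D : ℝ) := by exact_mod_cast hD
    linarith
  have hden : (0:ℝ) < ((d : ℝ) + ((D : ℝ) - 1) * (d' : ℝ)) * (1 - Pb) + Pa * (d' : ℝ) := by
    have h1 : (0:ℝ) < ((d : ℝ) + ((D : ℝ) - 1) * (d' : ℝ)) * (1 - Pb) := by
      apply mul_pos _ h1b
      nlinarith
    nlinarith
  rw [eq_div_iff (ne_of_gt hden)]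
  have hb' : b * (1 - Pb) = a * Pa := by linarith [hbeq]
  linear_combination ((d : ℝ) * (1 - Pb)) * hqsum - ((d : ℝ) * (d' : ℝ)) * hb'
end

section
/- Let D ≥ 1, d > d' ≥ 1 be integers, 0 < p₁ < p₀ < 1, n > 0, and suppose N'_f < D(1-P_b)·n / ([d+(D-1)d'](1-P_b) + P_a·d') where P_a = (1-p₁)^d, P_b = (1-p₁)^{d'}. Then N'_f < D·p₀·n / ([(d+(D-1)d')(1 - (d'-1)/2·p₁) - d]·p₀ + 1), provided the latter denominator is positive. -/
set_option maxHeartbeats 1000000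


theorem frozen_frame_bound (D d d' : ℕ) (hD : 1 ≤ D) (hdd : d' < d) (hd' : 1 ≤ d')
    (p₀ p₁ n N'f : ℝ) (hp₁ : 0 < p₁) (h10 : p₁ < p₀) (hp₀ : p₀ < 1) (hn : 0 < n)
    (Pa Pb : ℝ) (hPa : Pa = (1 - p₁) ^ d) (hPb : Pb = (1 - p₁) ^ d')
    (hbound : N'f < (D : ℝ) * (1 - Pb) * n
      / (((d : ℝ) + ((D : ℝ) - 1) * (d' : ℝ)) * (1 - Pb) + Pa * (d' : ℝ)))
    (hden : 0 < (((d : ℝ) + ((D : ℝ) - 1) * (d' : ℝ)) * (1 - ((d' : ℝ) - 1) / 2 * p₁)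
      - (d : ℝ)) * p₀ + 1) :
    N'f < (D : ℝ) * p₀ * n
      / ((((d : ℝ) + ((D : ℝ) - 1) * (d' : ℝ)) * (1 - ((d' : ℝ) - 1) / 2 * p₁)
          - (d : ℝ)) * p₀ + 1) := by
  have hD1 : (1:ℝ) ≤ (D:ℝ) := by exact_mod_cast hD
  have hd'1 : (1:ℝ) ≤ (d':ℝ) := by exact_mod_cast hd'
  have hd2 : (2:ℝ) ≤ (d:ℝ) := by exact_mod_cast Nat.succ_le_of_lt (Nat.lt_of_le_of_lt hd' hdd)
  have hp1lt1 : p₁ < 1 := lt_trans h10 hp₀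
  have hp₀0 : 0 < p₀ := lt_trans hp₁ h10
  have h1p : 0 < 1 - p₁ := by linarith
  -- Bernoulli bounds
  have hPa1 : 1 - (d:ℝ) * p₁ ≤ Pa := by
    rw [hPa]
    have h := one_add_mul_le_pow (by linarith : (-2:ℝ) ≤ -p₁) d
    rw [mul_neg, ← sub_eq_add_neg, ← sub_eq_add_neg] at h
    exact h
  have hPb1 : 1 - (d':ℝ) * p₁ ≤ Pb := by
    rw [hPb]
    have h := one_add_mul_le_pow (by linarith : (-2:ℝ) ≤ -p₁) d'
    rw [mul_neg, ← sub_eq_add_neg, ← sub_eq_add_neg] at h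
    exact h
  have hPa0 : 0 ≤ Pa := by rw [hPa]; positivity
  have hPblt1 : Pb < 1 := by
    rw [hPb]
    exact pow_lt_one₀ (le_of_lt h1p) (by linarith) (by omega)
  set S : ℝ := (d:ℝ) + ((D:ℝ) - 1) * (d':ℝ) with hS
  have hSd : (d:ℝ) ≤ S := by nlinarith
  have hB0 : 0 < 1 - Pb := by linarith
  have hB1 : 1 - Pb ≤ (d':ℝ) * p₁ := by linarith
  have hden1 : 0 < S * (1 - Pb) + Pa * (d':ℝ) := by nlinarith
  set K : ℝ := (S * (1 - ((d':ℝ) - 1) / 2 * p₁) - (d:ℝ)) * p₀ + 1 with hK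
  set t : ℝ := 1 - (S * ((d':ℝ) - 1) / 2 * p₁ + (d:ℝ)) * p₀ with ht
  have hnn : 0 ≤ S * ((d':ℝ) - 1) / 2 * p₁ * p₀ :=
    mul_nonneg (mul_nonneg (by nlinarith) hp₁.le) hp₀0.le
  have hfinal : (1 - Pb) * t ≤ p₀ * (Pa * (d':ℝ)) := by
    rcases le_or_gt t 0 with ht0 | ht0
    · have h1 : (1 - Pb) * t ≤ 0 := mul_nonpos_of_nonneg_of_nonpos hB0.le ht0
      have h2 : 0 ≤ p₀ * (Pa * (d':ℝ)) :=
        mul_nonneg hp₀0.le (mul_nonneg hPa0 (by linarith))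
      linarith
    · have hexp : t = 1 - (S * ((d':ℝ) - 1) / 2 * p₁ * p₀ + (d:ℝ) * p₀) := by
        rw [ht]; ring
      have hdp0 : (d:ℝ) * p₀ < 1 := by rw [hexp] at ht0; linarith [hnn]
      have h1 : (1 - Pb) * t ≤ ((d':ℝ) * p₁) * t :=
        mul_le_mul_of_nonneg_right hB1 ht0.le
      have h2 : ((d':ℝ) * p₁) * t ≤ ((d':ℝ) * p₁) * (1 - (d:ℝ) * p₀) := by
        apply mul_le_mul_of_nonneg_left _ (by positivity)
        rw [hexp]; linarith [hnn]
      have h3 : ((d':ℝ) * p₁) * (1 - (d:ℝ) * p₀) ≤ ((d':ℝ) * p₀) * (1 - (d:ℝ) * p₁) := by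
        nlinarith [mul_le_mul_of_nonneg_left h10.le (by linarith : (0:ℝ) ≤ (d':ℝ))]
      have h4 : ((d':ℝ) * p₀) * (1 - (d:ℝ) * p₁) ≤ ((d':ℝ) * p₀) * Pa :=
        mul_le_mul_of_nonneg_left hPa1 (by positivity)
      have h5 : ((d':ℝ) * p₀) * Pa = p₀ * (Pa * (d':ℝ)) := by ring
      linarith
  have main : (1 - Pb) * K ≤ p₀ * (S * (1 - Pb) + Pa * (d':ℝ)) := by
    have hid : (1 - Pb) * K - p₀ * (S * (1 - Pb) + Pa * (d':ℝ))
        = (1 - Pb) * t - p₀ * (Pa * (d':ℝ)) := by rw [hK, ht]; ring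
    linarith
  have key : (D:ℝ) * (1 - Pb) * n / (S * (1 - Pb) + Pa * (d':ℝ)) ≤ (D:ℝ) * p₀ * n / K := by
    rw [div_le_div_iff₀ hden1 hden]
    have hDn : (0:ℝ) ≤ (D:ℝ) * n := by positivity
    have h := mul_le_mul_of_nonneg_left main hDn
    have e1 : (D:ℝ) * (1 - Pb) * n * K = (D:ℝ) * n * ((1 - Pb) * K) := by ring
    have e2 : (D:ℝ) * p₀ * n * (S * (1 - Pb) + Pa * (d':ℝ))
        = (D:ℝ) * n * (p₀ * (S * (1 - Pb) + Pa * (d':ℝ))) := by ring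
    rw [e1, e2]; exact h
  exact lt_of_lt_of_le hbound key
end
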